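/- arXiv:math/0408123 — 2 statements merged into one kernel-verified Lean document; each statement's English description precedes it below -/
import Mathlib

section
/- The map μ_N sending an automorphism ρ of R[[t]] (with ρ(t) = ∑_{n≥1} c_n t^n, c_1 a unit) that preserves the subalgebra R[[t^N]] to the induced automorphism of R[[t^N]] is a surjective group homomorphism whose kernel is cyclic of order N, generated by t ↦ εt for ε a primitive N-th root of unity. Hence there is a short exact sequence 1 → Z/NZ → Aut_N(O_R) → Aut(O_R) → 1. -/
open PowerSeries

/-- The `(t)`-adic topology on `ℂ[[t]]`. -/
noncomputable def tadic : TopologicalSpace (PowerSeries ℂ) :=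
  (Ideal.span {(PowerSeries.X : PowerSeries ℂ)}).adicTopology

/-- A continuous `ℂ`-algebra automorphism of `ℂ[[t]]` preserving the ideal `(t)`,
i.e. an element of `Aut(O)`. -/
def IsAutO (σ : PowerSeries ℂ ≃ₐ[ℂ] PowerSeries ℂ) : Prop :=
  @Continuous _ _ tadic tadic σ ∧
    ∀ f ∈ Ideal.span {(PowerSeries.X : PowerSeries ℂ)},
      σ f ∈ Ideal.span {(PowerSeries.X : PowerSeries ℂ)}

/-- An element of `Aut_N(O)`: an element of `Aut(O)` which moreover preserves the
subalgebra `ℂ[[t^N]]`, realized as the range of the embedding `ι : ℂ[[z]] → ℂ[[t]]`,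
`z ↦ t^N`. -/
def IsAutNO (ι : PowerSeries ℂ →ₐ[ℂ] PowerSeries ℂ)
    (σ : PowerSeries ℂ ≃ₐ[ℂ] PowerSeries ℂ) : Prop :=
  IsAutO σ ∧ ∀ f, σ (ι f) ∈ Set.range ι

/-!
An endomorphism `φ` of `k[[t]]` with `φ(t) ∈ (t)` is determined by `φ(t)`, because
`φ(f) ≡ φ(trunc_n f) mod t^n`; it is an automorphism exactly when `φ(t)` has order one, the inverse
being substitution of the compositional inverse of `φ(t)`. In particular `ι` is `expand N`,
`z ↦ t^N`. For `ρ ∈ Aut_N(O)` write `ρ(t)^N = ι(g)`: comparing orders gives `ord g = 1`, and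
`μ_N(ρ)` is `z ↦ g`. Conversely `τ(z) = z v(z)` lifts to `t ↦ t w` with `w` an `N`-th root of
`v(t^N)`, obtained from the binomial series `(1 + X)^(1/N)`. Finally `ρ(t) = t u` lies in the
kernel iff `u^N = 1`, and in the domain `ℂ[[t]]` the only roots of `Y^N - 1 = ∏ (Y - ε)` are the
constants `ε`.
-/

namespace PowerSeries

section CommRing

variable {R : Type*} [CommRing R]

theorem algHom_ext_of_constantCoeff_X_eq_zero {φ ψ : R⟦X⟧ →ₐ[R] R⟦X⟧}
    (hφ : constantCoeff (φ X) = 0) (h : φ X = ψ X) : φ = ψ := by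
  have hpoly : φ.comp (Polynomial.coeToPowerSeries.algHom R) =
      ψ.comp (Polynomial.coeToPowerSeries.algHom R) :=
    Polynomial.algHom_ext (by simpa using h)
  have hφψ (p : Polynomial R) : φ p = ψ p := by
    simpa using AlgHom.congr_fun hpoly p
  refine AlgHom.ext fun f => sub_eq_zero.1 <| ext fun n => ?_
  set g := mk fun i ↦ coeff (i + (n + 1)) f
  have hsplit : φ f - ψ f = φ X ^ (n + 1) * (φ g - ψ g) := by
    rw [eq_X_pow_mul_shift_add_trunc (n + 1) f]
    simp only [map_add, map_mul, map_pow, hφψ, h]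
    ring
  obtain ⟨u, hu⟩ := X_dvd_iff.2 hφ
  rw [hsplit, hu, mul_pow, mul_assoc, coeff_X_pow_mul', if_neg (by omega), map_zero]

noncomputable def substAlgEquiv (P : R⟦X⟧) (hP : constantCoeff P = 0)
    (hP' : IsUnit (coeff 1 P)) : R⟦X⟧ ≃ₐ[R] R⟦X⟧ :=
  have hsub := HasSubst.of_constantCoeff_zero' hP
  have hinv := HasSubst.substInvOfIsUnit P hP'
  have hleft : substAlgHom hsub (P.substInvOfIsUnit hP') = X := by
    rw [coe_substAlgHom, subst_substInvOfIsUnit_left P hP hP']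
  have hright : substAlgHom hinv P = X := by
    rw [coe_substAlgHom, subst_substInvOfIsUnit_right P hP hP']
  AlgEquiv.ofAlgHom (substAlgHom hsub) (substAlgHom hinv)
    (algHom_ext_of_constantCoeff_X_eq_zero (by simp [substAlgHom_X, hleft])
      (by simp [substAlgHom_X, hleft]))
    (algHom_ext_of_constantCoeff_X_eq_zero (by simp [substAlgHom_X, hright])
      (by simp [substAlgHom_X, hright]))

@[simp]
theorem substAlgEquiv_X (P : R⟦X⟧) (hP : constantCoeff P = 0) (hP' : IsUnit (coeff 1 P)) :
    substAlgEquiv P hP hP' X = P := by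
  simp [substAlgEquiv, substAlgHom_X]

theorem binomialSeries_nsmul {S A : Type*} [CommRing S] [BinomialRing S] [Ring A] [Algebra S A]
    (n : ℕ) (r : S) : binomialSeries A (n • r) = binomialSeries A r ^ n := by
  induction n with
  | zero => simp
  | succ n ih => rw [succ_nsmul, binomialSeries_add, ih, pow_succ]

end CommRing

section Field

variable {k : Type*} [Field k]

theorem exists_pow_eq_of_constantCoeff_ne_zero [IsAlgClosed k] [CharZero k] {u : k⟦X⟧}
    (hu : constantCoeff u ≠ 0) {N : ℕ} (hN : N ≠ 0) : ∃ w : k⟦X⟧, w ^ N = u := by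
  obtain ⟨c, hc⟩ := IsAlgClosed.exists_pow_nat_eq (constantCoeff u) (Nat.pos_of_ne_zero hN)
  -- `u = c^N (1 + h)`, so `w = c (1 + h)^(1/N)`
  set h := C (c ^ N)⁻¹ * u - 1
  have hh : HasSubst h := HasSubst.of_constantCoeff_zero' (by simp [h, hc, hu])
  refine ⟨C c * substAlgHom hh (binomialSeries k (1 / N : ℚ)), ?_⟩
  have hroot : binomialSeries k (1 / N : ℚ) ^ N = 1 + X := by
    rw [← binomialSeries_nsmul, nsmul_eq_mul, mul_one_div_cancel (by exact_mod_cast hN)]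
    simpa using binomialSeries_nat (R := ℚ) (A := k) 1
  rw [mul_pow, ← map_pow (substAlgHom hh), hroot, map_add, map_one, substAlgHom_X, ← map_pow,
    add_sub_cancel, ← mul_assoc, ← map_mul, mul_inv_cancel₀ (hc ▸ hu), map_one, one_mul]

theorem order_eq_one_iff {P : k⟦X⟧} : order P = 1 ↔ constantCoeff P = 0 ∧ coeff 1 P ≠ 0 := by
  rw [← Nat.cast_one, order_eq_nat, and_comm]
  simp [coeff_zero_eq_constantCoeff_apply]

theorem order_X_mul_eq_one_iff {u : k⟦X⟧} : order (X * u) = 1 ↔ constantCoeff u ≠ 0 := by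
  rw [order_mul, order_X, ← not_iff_not, not_not, ← order_ne_zero_iff_constCoeff_eq_zero]
  simp

theorem exists_algEquiv_X_eq {P : k⟦X⟧} (hP : order P = 1) :
    ∃ σ : k⟦X⟧ ≃ₐ[k] k⟦X⟧, σ X = P :=
  have ⟨hP₀, hP₁⟩ := order_eq_one_iff.1 hP
  ⟨substAlgEquiv P hP₀ (Ne.isUnit hP₁), substAlgEquiv_X _ _ _⟩

theorem constantCoeff_algEquiv_X (σ : k⟦X⟧ ≃ₐ[k] k⟦X⟧) : constantCoeff (σ X) = 0 := by
  by_contra h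
  have hunit : IsUnit (σ.symm (σ X)) := (isUnit_iff_constantCoeff.2 (Ne.isUnit h)).map σ.symm
  rw [AlgEquiv.symm_apply_apply, isUnit_iff_constantCoeff, constantCoeff_X] at hunit
  exact not_isUnit_zero hunit

theorem order_algEquiv_X (σ : k⟦X⟧ ≃ₐ[k] k⟦X⟧) : order (σ X) = 1 := by
  obtain ⟨g, hg⟩ := X_dvd_iff.2 (constantCoeff_algEquiv_X σ.symm)
  have hsum : order (σ X) + order (σ g) = 1 := by
    rw [← order_mul, ← map_mul, ← hg, AlgEquiv.apply_symm_apply, order_X]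
  exact le_antisymm (hsum ▸ le_self_add)
    (one_le_order_iff_constCoeff_eq_zero.2 (constantCoeff_algEquiv_X σ))

theorem algEquiv_ext_X {σ₁ σ₂ : k⟦X⟧ ≃ₐ[k] k⟦X⟧} (h : σ₁ X = σ₂ X) : σ₁ = σ₂ :=
  AlgEquiv.coe_toAlgHom_injective <|
    algHom_ext_of_constantCoeff_X_eq_zero (constantCoeff_algEquiv_X σ₁) h

theorem eq_C_of_pow_eq_one {N : ℕ} (hN : 0 < N) {ζ : k} (hζ : IsPrimitiveRoot ζ N) {u : k⟦X⟧}
    (hu : u ^ N = 1) : ∃ ε : k, ε ^ N = 1 ∧ u = C ε := by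
  have hprod := congrArg (Polynomial.aeval u) (Polynomial.X_pow_sub_one_eq_prod hN hζ)
  simp only [map_sub, map_pow, map_one, Polynomial.aeval_X, hu, sub_self, map_prod,
    Polynomial.aeval_C] at hprod
  obtain ⟨ε, hε, hεu⟩ := Finset.prod_eq_zero_iff.1 hprod.symm
  exact ⟨ε, (Polynomial.mem_nthRootsFinset hN 1).1 hε, sub_eq_zero.1 hεu⟩

theorem _root_.IsPrimitiveRoot.ncard_setOf_pow_eq_one {N : ℕ} {ζ : k} (hζ : IsPrimitiveRoot ζ N)
    (hN : N ≠ 0) :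
    {ε : k | ε ^ N = 1}.ncard = N := by
  have : {ε : k | ε ^ N = 1} = ↑(Polynomial.nthRootsFinset N (1 : k)) := by
    ext ε
    simp [Polynomial.mem_nthRootsFinset (Nat.pos_of_ne_zero hN)]
  rw [this, Set.ncard_coe_finset, hζ.card_nthRootsFinset]

variable {N : ℕ} (hN : N ≠ 0)

theorem expand_injective : Function.Injective (expand N hN : k⟦X⟧ →ₐ[k] k⟦X⟧) :=
  fun f g h => ext fun m => by simpa only [coeff_expand_mul] using congrArg (coeff (N * m)) h

theorem exists_algEquiv_comp_expand (σ : k⟦X⟧ ≃ₐ[k] k⟦X⟧)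
    (hσ : ∀ f, σ (expand N hN f) ∈ Set.range (expand N hN)) :
    ∃ τ : k⟦X⟧ ≃ₐ[k] k⟦X⟧, (expand N hN).comp τ.toAlgHom = σ.toAlgHom.comp (expand N hN) := by
  obtain ⟨g, hg⟩ := hσ X
  rw [expand_X, map_pow] at hg
  have hg1 : order g = 1 := by
    have := congrArg order hg
    rw [order_expand, order_pow, order_algEquiv_X, nsmul_eq_mul, nsmul_eq_mul] at this
    exact (ENat.mul_right_strictMono (by exact_mod_cast hN) (ENat.natCast_ne_top N)).injective this
  obtain ⟨τ, hτ⟩ := exists_algEquiv_X_eq hg1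
  refine ⟨τ, algHom_ext_of_constantCoeff_X_eq_zero ?_ ?_⟩
  · simp [hτ, constantCoeff_expand, order_eq_one_iff.1 hg1]
  · simp [hτ, hg]

theorem exists_algEquiv_expand_comp [IsAlgClosed k] [CharZero k] (τ : k⟦X⟧ ≃ₐ[k] k⟦X⟧) :
    ∃ σ : k⟦X⟧ ≃ₐ[k] k⟦X⟧, (expand N hN).comp τ.toAlgHom = σ.toAlgHom.comp (expand N hN) := by
  obtain ⟨v, hv⟩ := X_dvd_iff.2 (constantCoeff_algEquiv_X τ)
  have hv0 : constantCoeff v ≠ 0 := order_X_mul_eq_one_iff.1 (hv ▸ order_algEquiv_X τ)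
  obtain ⟨w, hw⟩ := exists_pow_eq_of_constantCoeff_ne_zero
    (by rwa [constantCoeff_expand] : constantCoeff (expand N hN v) ≠ 0) hN
  have hw0 : constantCoeff w ≠ 0 := by
    intro h
    apply hv0
    rw [← constantCoeff_expand N hN, ← hw, map_pow, h, zero_pow hN]
  obtain ⟨σ, hσ⟩ := exists_algEquiv_X_eq (order_X_mul_eq_one_iff.2 hw0)
  refine ⟨σ, algHom_ext_of_constantCoeff_X_eq_zero ?_ ?_⟩
  · simp [hv, constantCoeff_expand, hN]
  · simp [hv, hσ, mul_pow, hw]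

theorem comp_expand_eq_expand_iff {ζ : k} (hζ : IsPrimitiveRoot ζ N) (σ : k⟦X⟧ ≃ₐ[k] k⟦X⟧) :
    σ.toAlgHom.comp (expand N hN) = expand N hN ↔ ∃ ε : k, ε ^ N = 1 ∧ σ X = C ε * X := by
  constructor
  · intro h
    obtain ⟨u, hu⟩ := X_dvd_iff.2 (constantCoeff_algEquiv_X σ)
    have huN : u ^ N = 1 := by
      have hX : σ (X ^ N) = X ^ N := by simpa using AlgHom.congr_fun h X
      rw [map_pow, hu, mul_pow] at hX
      exact mul_left_cancel₀ (pow_ne_zero N X_ne_zero) (hX.trans (mul_one _).symm)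
    obtain ⟨ε, hε, rfl⟩ := eq_C_of_pow_eq_one (Nat.pos_of_ne_zero hN) hζ huN
    exact ⟨ε, hε, hu.trans (mul_comm _ _)⟩
  · rintro ⟨ε, hε, hσ⟩
    refine algHom_ext_of_constantCoeff_X_eq_zero ?_ ?_
    · simp [hσ, hN]
    · simpa using show σ (X ^ N) = X ^ N by
        rw [map_pow, hσ, mul_pow, ← map_pow, hε, map_one, one_mul]

theorem exists_pow_of_comp_expand_eq_expand {ζ : k} (hζ : IsPrimitiveRoot ζ N)
    {σ : k⟦X⟧ ≃ₐ[k] k⟦X⟧} (hσ : σ.toAlgHom.comp (expand N hN) = expand N hN) :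
    ∃ i : ℕ, σ X = C (ζ ^ i) * X := by
  obtain ⟨ε, hε, hσX⟩ := (comp_expand_eq_expand_iff hN hζ σ).1 hσ
  have : NeZero N := ⟨hN⟩
  obtain ⟨i, -, hi⟩ := hζ.eq_pow_of_pow_eq_one hε
  exact ⟨i, by rw [hσX, hi]⟩

theorem ncard_setOf_comp_expand_eq_expand {ζ : k} (hζ : IsPrimitiveRoot ζ N) :
    {σ : k⟦X⟧ ≃ₐ[k] k⟦X⟧ | σ.toAlgHom.comp (expand N hN) = expand N hN}.ncard = N := by
  set S := {σ : k⟦X⟧ ≃ₐ[k] k⟦X⟧ | σ.toAlgHom.comp (expand N hN) = expand N hN}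
  have hinj : Set.InjOn (fun σ : k⟦X⟧ ≃ₐ[k] k⟦X⟧ ↦ coeff 1 (σ X)) S := by
    intro σ₁ h₁ σ₂ h₂ h
    obtain ⟨ε₁, -, h₁⟩ := (comp_expand_eq_expand_iff hN hζ σ₁).1 h₁
    obtain ⟨ε₂, -, h₂⟩ := (comp_expand_eq_expand_iff hN hζ σ₂).1 h₂
    simp only [h₁, h₂, coeff_C_mul, coeff_one_X, mul_one] at h
    exact algEquiv_ext_X (by rw [h₁, h₂, h])
  have himage : (fun σ : k⟦X⟧ ≃ₐ[k] k⟦X⟧ ↦ coeff 1 (σ X)) '' S = {ε : k | ε ^ N = 1} := by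
    ext ε
    constructor
    · rintro ⟨σ, hσ, rfl⟩
      obtain ⟨ε, hε, hσX⟩ := (comp_expand_eq_expand_iff hN hζ σ).1 hσ
      simpa [hσX] using hε
    · intro hε
      have hε0 : ε ≠ 0 := by rintro rfl; simp [zero_pow hN] at hε
      obtain ⟨σ, hσ⟩ := exists_algEquiv_X_eq (P := C ε * X) (order_eq_one_iff.2 (by simp [hε0]))
      exact ⟨σ, (comp_expand_eq_expand_iff hN hζ σ).2 ⟨ε, hε, hσ⟩, by simp [hσ]⟩
  rw [← hinj.ncard_image, himage, hζ.ncard_setOf_pow_eq_one hN]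

end Field

end PowerSeries

theorem continuous_tadic_of_X_dvd {φ : ℂ⟦X⟧ →+* ℂ⟦X⟧} (hφ : X ∣ φ X) :
    @Continuous _ _ tadic tadic φ := by
  let _ : WithIdeal ℂ⟦X⟧ := ⟨Ideal.span {X}⟩
  refine (WithIdeal.uniformContinuous_of_map_le ?_).continuous
  change Ideal.map φ (Ideal.span {X}) ≤ Ideal.span {X}
  rw [Ideal.map_span, Set.image_singleton, Ideal.span_le, Set.singleton_subset_iff]
  exact Ideal.mem_span_singleton.2 hφ

theorem isAutO (σ : ℂ⟦X⟧ ≃ₐ[ℂ] ℂ⟦X⟧) : IsAutO σ := by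
  have hσX : X ∣ σ X := X_dvd_iff.2 (constantCoeff_algEquiv_X σ)
  refine ⟨continuous_tadic_of_X_dvd (φ := (σ : ℂ⟦X⟧ →+* ℂ⟦X⟧)) hσX, fun f hf => ?_⟩
  rw [Ideal.mem_span_singleton] at hf ⊢
  exact hσX.trans (map_dvd σ hf)

theorem isAutNO_iff (ι : ℂ⟦X⟧ →ₐ[ℂ] ℂ⟦X⟧) (σ : ℂ⟦X⟧ ≃ₐ[ℂ] ℂ⟦X⟧) :
    IsAutNO ι σ ↔ ∀ f, σ (ι f) ∈ Set.range ι :=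
  and_iff_right (isAutO σ)

theorem muN_exact_sequence_general (N : ℕ) (hN : 0 < N)
    (ι : PowerSeries ℂ →ₐ[ℂ] PowerSeries ℂ)
    (hιX : ι PowerSeries.X = PowerSeries.X ^ N) :
    -- `μ_N` is well defined: the induced automorphism exists and is unique
    (∀ σ, IsAutNO ι σ → ∃! τ : PowerSeries ℂ ≃ₐ[ℂ] PowerSeries ℂ,
      IsAutO τ ∧ ι.comp τ.toAlgHom = (σ.toAlgHom).comp ι) ∧
    -- `μ_N` is a group homomorphism: it intertwines composition
    (∀ (σ₁ σ₂ τ₁ τ₂ : PowerSeries ℂ ≃ₐ[ℂ] PowerSeries ℂ), IsAutNO ι σ₁ → IsAutNO ι σ₂ →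
      ι.comp τ₁.toAlgHom = (σ₁.toAlgHom).comp ι →
      ι.comp τ₂.toAlgHom = (σ₂.toAlgHom).comp ι →
      ι.comp ((τ₂.trans τ₁).toAlgHom) = ((σ₂.trans σ₁).toAlgHom).comp ι) ∧
    -- `μ_N` is surjective
    (∀ τ, IsAutO τ → ∃ σ, IsAutNO ι σ ∧ ι.comp τ.toAlgHom = (σ.toAlgHom).comp ι) ∧
    -- the kernel consists exactly of the `t ↦ εt`, `ε^N = 1`
    (∀ σ, IsAutNO ι σ → ((σ.toAlgHom).comp ι = ι ↔
      ∃ ε : ℂ, ε ^ N = 1 ∧ σ PowerSeries.X = PowerSeries.C ε * PowerSeries.X)) ∧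
    -- the kernel is cyclic of order `N`, generated by `t ↦ εt`, `ε` primitive
    ({σ : PowerSeries ℂ ≃ₐ[ℂ] PowerSeries ℂ |
        IsAutNO ι σ ∧ (σ.toAlgHom).comp ι = ι}.ncard = N ∧
      ∀ ε : ℂ, IsPrimitiveRoot ε N →
        ∀ σ, IsAutNO ι σ → (σ.toAlgHom).comp ι = ι →
          ∃ k : ℕ, σ PowerSeries.X = PowerSeries.C (ε ^ k) * PowerSeries.X) := by
  have hN₀ : N ≠ 0 := hN.ne'
  obtain rfl : ι = expand N hN₀ :=
    algHom_ext_of_constantCoeff_X_eq_zero (by simp [hιX, hN₀]) (by rw [hιX, expand_X])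
  have hζ := Complex.isPrimitiveRoot_exp N hN₀
  refine ⟨fun σ hσ => ?_, fun σ₁ σ₂ τ₁ τ₂ _ _ h₁ h₂ => ?_, fun τ _ => ?_,
    fun σ _ => comp_expand_eq_expand_iff hN₀ hζ σ, ?_⟩
  · obtain ⟨τ, hτ⟩ := exists_algEquiv_comp_expand hN₀ σ hσ.2
    refine ⟨τ, ⟨isAutO τ, hτ⟩, fun τ' ⟨_, hτ'⟩ => AlgEquiv.ext fun f => ?_⟩
    exact expand_injective hN₀ (AlgHom.congr_fun (hτ'.trans hτ.symm) f)
  · exact AlgHom.ext fun f =>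
      (AlgHom.congr_fun h₁ (τ₂ f)).trans (congrArg σ₁ (AlgHom.congr_fun h₂ f))
  · obtain ⟨σ, hσ⟩ := exists_algEquiv_expand_comp hN₀ τ
    exact ⟨σ, (isAutNO_iff _ σ).2 fun f => ⟨τ f, AlgHom.congr_fun hσ f⟩, hσ⟩
  · refine ⟨(congrArg Set.ncard ?_).trans (ncard_setOf_comp_expand_eq_expand hN₀ hζ),
      fun ε hε σ _ hσ => exists_pow_of_comp_expand_eq_expand hN₀ hε hσ⟩
    exact Set.ext fun σ => and_iff_right_of_imp fun h =>
      (isAutNO_iff _ σ).2 fun f => ⟨f, (AlgHom.congr_fun h f).symm⟩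

/-- The short exact sequence `1 → ℤ/Nℤ → Aut_N(O) → Aut(O) → 1`:  the map `μ_N`
sending `ρ ∈ Aut_N(O)` to the induced automorphism of `ℂ[[t^N]] = ℂ[[z]]` is a
well-defined surjective group homomorphism whose kernel consists exactly of the
automorphisms `t ↦ εt` with `ε^N = 1`; the kernel is cyclic of order `N`, generated by
`t ↦ εt` for `ε` a primitive `N`-th root of unity. -/
theorem muN_exact_sequence (N : ℕ) (hN : 0 < N)
    (ι : PowerSeries ℂ →ₐ[ℂ] PowerSeries ℂ)
    (hιX : ι PowerSeries.X = PowerSeries.X ^ N)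
    (hιcont : @Continuous _ _ tadic tadic ι) (hιinj : Function.Injective ι) :
    -- `μ_N` is well defined: the induced automorphism exists and is unique
    (∀ σ, IsAutNO ι σ → ∃! τ : PowerSeries ℂ ≃ₐ[ℂ] PowerSeries ℂ,
      IsAutO τ ∧ ι.comp τ.toAlgHom = (σ.toAlgHom).comp ι) ∧
    -- `μ_N` is a group homomorphism: it intertwines composition
    (∀ (σ₁ σ₂ τ₁ τ₂ : PowerSeries ℂ ≃ₐ[ℂ] PowerSeries ℂ), IsAutNO ι σ₁ → IsAutNO ι σ₂ →
      ι.comp τ₁.toAlgHom = (σ₁.toAlgHom).comp ι →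
      ι.comp τ₂.toAlgHom = (σ₂.toAlgHom).comp ι →
      ι.comp ((τ₂.trans τ₁).toAlgHom) = ((σ₂.trans σ₁).toAlgHom).comp ι) ∧
    -- `μ_N` is surjective
    (∀ τ, IsAutO τ → ∃ σ, IsAutNO ι σ ∧ ι.comp τ.toAlgHom = (σ.toAlgHom).comp ι) ∧
    -- the kernel consists exactly of the `t ↦ εt`, `ε^N = 1`
    (∀ σ, IsAutNO ι σ → ((σ.toAlgHom).comp ι = ι ↔
      ∃ ε : ℂ, ε ^ N = 1 ∧ σ PowerSeries.X = PowerSeries.C ε * PowerSeries.X)) ∧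
    -- the kernel is cyclic of order `N`, generated by `t ↦ εt`, `ε` primitive
    ({σ : PowerSeries ℂ ≃ₐ[ℂ] PowerSeries ℂ |
        IsAutNO ι σ ∧ (σ.toAlgHom).comp ι = ι}.ncard = N ∧
      ∀ ε : ℂ, IsPrimitiveRoot ε N →
        ∀ σ, IsAutNO ι σ → (σ.toAlgHom).comp ι = ι →
          ∃ k : ℕ, σ PowerSeries.X = PowerSeries.C (ε ^ k) * PowerSeries.X) :=
  muN_exact_sequence_general N hN ι hιX
end

section
/- An automorphism ρ of C[[t]] with ρ(t) = ∑_{n≥1} c_n t^n preserves the subalgebra C[[t^N]] if and only if c_n = 0 for all n not congruent to 1 modulo N, i.e., ρ(t) = ∑_{k≥0} c_{kN+1} t^{kN+1}. -/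
open PowerSeries

/-!
Let `ζ` be a primitive `N`-th root of unity and `g = ρ(t) = c₁ t + ⋯`. The subalgebra `ℂ[[t^N]]`
is the fixed ring of the substitution `t ↦ ζ t`, and more generally a series is supported on the
exponents `≡ r (mod N)` iff this substitution multiplies it by `ζ ^ r`. The condition on the
coefficients of `g` thus reads `g(ζ t) = ζ g(t)`, which makes `g(ζ t)^N = g(t)^N`, and `ρ ∘ ι` then
commutes with the substitution. Conversely, if `ρ` preserves `ℂ[[t^N]]` then `g(ζ t)^N = g(t)^N`,
so `g(ζ t) = ζ^i g(t)` in the domain `ℂ[[t]]`; comparing coefficients of `t` and using `c₁ ≠ 0`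
(as `ρ` is onto) gives `ζ^i = ζ`. Algebra endomorphisms sending `t` into `(t)` are determined by the
image of `t`, without any continuity assumption, which identifies `ι` with `t ↦ t^N`.
-/

theorem IsPrimitiveRoot.exists_eq_pow_mul_of_pow_eq_pow {R : Type*} [CommRing R] [IsDomain R]
    {ζ : R} {N : ℕ} (hζ : IsPrimitiveRoot ζ N) (hN : 0 < N) {x y : R} (h : x ^ N = y ^ N) :
    ∃ i, x = ζ ^ i * y := by
  have hprod := hζ.pow_sub_pow_eq_prod_sub_mul (x := x) (y := y) hN
  rw [h, sub_self, eq_comm, Finset.prod_eq_zero_iff] at hprod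
  obtain ⟨ω, hω, hxω⟩ := hprod
  have : NeZero N := ⟨hN.ne'⟩
  obtain ⟨i, -, rfl⟩ := hζ.eq_pow_of_pow_eq_one ((Polynomial.mem_nthRootsFinset hN 1).1 hω)
  exact ⟨i, sub_eq_zero.mp hxω⟩

namespace PowerSeries

variable {R : Type*} [CommRing R]

theorem X_pow_dvd_map_sub {φ : R⟦X⟧ →ₐ[R] R⟦X⟧} (hφ : X ∣ φ X) {n : ℕ} {f g : R⟦X⟧}
    (h : X ^ n ∣ f - g) : X ^ n ∣ φ f - φ g := by
  obtain ⟨r, hr⟩ := h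
  rw [← map_sub, hr, map_mul, map_pow]
  exact dvd_mul_of_dvd_left (pow_dvd_pow_of_dvd hφ n) _

theorem coeff_eq_of_X_pow_dvd_sub {n : ℕ} {f g : R⟦X⟧} (h : X ^ (n + 1) ∣ f - g) :
    coeff n f = coeff n g := by
  rw [← sub_eq_zero, ← map_sub]
  exact X_pow_dvd_iff.mp h n n.lt_succ_self

theorem X_pow_dvd_sub_trunc (n : ℕ) (f : R⟦X⟧) : X ^ n ∣ f - (trunc n f : R⟦X⟧) :=
  ⟨_, sub_eq_iff_eq_add.mpr (eq_X_pow_mul_shift_add_trunc n f)⟩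

/-- The `d`-th coefficient of `φ f` only depends on `f` modulo `X ^ (d + 1)`, so no continuity
is needed. -/
theorem algHom_ext_of_X_dvd {φ ψ : R⟦X⟧ →ₐ[R] R⟦X⟧} (hφ : X ∣ φ X) (h : φ X = ψ X) :
    φ = ψ := by
  have hψ : X ∣ ψ X := h ▸ hφ
  have hpoly : φ.comp (Polynomial.coeToPowerSeries.algHom R) =
      ψ.comp (Polynomial.coeToPowerSeries.algHom R) :=
    Polynomial.algHom_ext (by simpa using h)
  ext f d
  rw [coeff_eq_of_X_pow_dvd_sub (X_pow_dvd_map_sub hφ (X_pow_dvd_sub_trunc (d + 1) f)),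
    coeff_eq_of_X_pow_dvd_sub (X_pow_dvd_map_sub hψ (X_pow_dvd_sub_trunc (d + 1) f))]
  simpa using congrArg (coeff d) (DFunLike.congr_fun hpoly (trunc (d + 1) f))

theorem coeff_one_algHom_apply {φ : R⟦X⟧ →ₐ[R] R⟦X⟧} (hφ : X ∣ φ X) (f : R⟦X⟧) :
    coeff 1 (φ f) = coeff 1 f * coeff 1 (φ X) := by
  have hlin : X ^ 2 ∣ f - (coeff 0 f • 1 + coeff 1 f • X) := by
    rw [X_pow_dvd_iff]
    intro m hm
    interval_cases m <;> simp
  rw [coeff_eq_of_X_pow_dvd_sub (X_pow_dvd_map_sub hφ hlin), map_add, map_smul,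
    map_smul, map_one]
  simp

theorem rescale_map_eq_of_rescale_map_X {φ : R⟦X⟧ →ₐ[R] R⟦X⟧} (hφ : X ∣ φ X) {a : R}
    (h : rescale a (φ X) = φ X) (f : R⟦X⟧) : rescale a (φ f) = φ f := by
  have hr (F : R⟦X⟧) : rescaleAlgHom a F = rescale a F :=
    RingHom.congr_fun (coe_rescaleAlgHom a) F
  have hcomp : φ = (rescaleAlgHom a).comp φ :=
    algHom_ext_of_X_dvd hφ (by rw [AlgHom.comp_apply, hr, h])
  rw [← hr, ← AlgHom.comp_apply, ← hcomp]

variable [IsDomain R] {ζ : R} {N : ℕ}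

theorem rescale_eq_C_pow_mul_iff (hζ : IsPrimitiveRoot ζ N) (hN : N ≠ 0) (F : R⟦X⟧) (r : ℕ) :
    rescale ζ F = C (ζ ^ r) * F ↔ ∀ n, ¬ n ≡ r [MOD N] → coeff n F = 0 := by
  have hpow (n : ℕ) : ζ ^ n = ζ ^ r ↔ n ≡ r [MOD N] := by
    rw [(hζ.isOfFinOrder hN).pow_eq_pow_iff_modEq, ← hζ.eq_orderOf]
  simp only [PowerSeries.ext_iff, coeff_rescale, coeff_C_mul, mul_eq_mul_right_iff, hpow]
  exact forall_congr' fun n => or_iff_not_imp_left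

theorem mem_range_expand_iff_rescale_eq (hζ : IsPrimitiveRoot ζ N) (hN : N ≠ 0) {F : R⟦X⟧} :
    F ∈ Set.range (expand N hN) ↔ rescale ζ F = F := by
  have hfix := rescale_eq_C_pow_mul_iff hζ hN F 0
  simp only [pow_zero, map_one, one_mul, Nat.modEq_zero_iff_dvd] at hfix
  rw [hfix]
  constructor
  · rintro ⟨f, rfl⟩ n hn
    exact coeff_expand_of_not_dvd N hN f hn
  · intro hF
    refine ⟨mk fun k => coeff (N * k) F, ext fun n => ?_⟩
    rw [coeff_expand]
    split_ifs with hn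
    · rw [coeff_mk, Nat.mul_div_cancel' hn]
    · exact (hF n hn).symm

theorem rescale_eq_C_mul_of_rescale_pow_eq (hζ : IsPrimitiveRoot ζ N) (hN : 0 < N) {g : R⟦X⟧}
    (hg : coeff 1 g ≠ 0) (h : rescale ζ (g ^ N) = g ^ N) : rescale ζ g = C ζ * g := by
  have hCζ : IsPrimitiveRoot (C ζ) N := hζ.map_of_injective (f := C (R := R)) C_injective
  obtain ⟨i, hi⟩ :=
    hCζ.exists_eq_pow_mul_of_pow_eq_pow hN (x := rescale ζ g) (y := g) (by rw [← map_pow, h])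
  have hζi : ζ = ζ ^ i := by
    have h1 := congrArg (coeff 1) hi
    rw [coeff_rescale, ← map_pow, coeff_C_mul, pow_one] at h1
    exact mul_right_cancel₀ hg h1
  rw [hi, ← map_pow, ← hζi]

end PowerSeries

theorem preserves_tN_iff_coeff_general (N : ℕ) (hN : 0 < N)
    (ι : PowerSeries ℂ →ₐ[ℂ] PowerSeries ℂ)
    (hιX : ι PowerSeries.X = PowerSeries.X ^ N)
    (ρ : PowerSeries ℂ ≃ₐ[ℂ] PowerSeries ℂ) (hρ : IsAutO ρ) :
    (∀ f, ρ (ι f) ∈ Set.range ι) ↔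
      ∀ n : ℕ, ¬ n ≡ 1 [MOD N] → PowerSeries.coeff n (ρ PowerSeries.X) = 0 := by
  have hζ := Complex.isPrimitiveRoot_exp N hN.ne'
  have hι : ι = expand N hN.ne' :=
    algHom_ext_of_X_dvd (hιX ▸ dvd_pow_self X hN.ne') (by rw [hιX, expand_X])
  have hgX : X ∣ ρ X :=
    Ideal.mem_span_singleton.mp (hρ.2 X (Ideal.mem_span_singleton_self X))
  have hg1 : coeff 1 (ρ X) ≠ 0 := by
    obtain ⟨f, hf⟩ := ρ.surjective X
    have h1 : coeff 1 (ρ f) = coeff 1 f * coeff 1 (ρ X) :=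
      coeff_one_algHom_apply (φ := ρ.toAlgHom) hgX f
    rw [hf, coeff_one_X] at h1
    exact right_ne_zero_of_mul_eq_one h1.symm
  rw [← rescale_eq_C_pow_mul_iff hζ hN.ne' _ 1, pow_one, hι]
  simp only [mem_range_expand_iff_rescale_eq hζ hN.ne']
  constructor
  · intro H
    exact rescale_eq_C_mul_of_rescale_pow_eq hζ hN hg1 (by simpa using H X)
  · intro hg f
    refine rescale_map_eq_of_rescale_map_X (φ := ρ.toAlgHom.comp (expand N hN.ne')) ?_ ?_ f
    · simpa using dvd_pow hgX hN.ne'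
    · change rescale _ (ρ (expand N hN.ne' X)) = ρ (expand N hN.ne' X)
      rw [expand_X, map_pow, map_pow, hg, mul_pow, ← map_pow, hζ.pow_eq_one, map_one, one_mul]

/-- An automorphism `ρ` of `ℂ[[t]]` with `ρ(t) = ∑_{n≥1} c_n t^n` preserves the
subalgebra `ℂ[[t^N]]` (realized as the range of `ι : ℂ[[z]] → ℂ[[t]]`, `z ↦ t^N`)
if and only if `c_n = 0` for all `n` not congruent to `1` modulo `N`, i.e.
`ρ(t) = ∑_{k≥0} c_{kN+1} t^{kN+1}`. -/
theorem preserves_tN_iff_coeff (N : ℕ) (hN : 0 < N)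
    (ι : PowerSeries ℂ →ₐ[ℂ] PowerSeries ℂ)
    (hιX : ι PowerSeries.X = PowerSeries.X ^ N)
    (hιcont : @Continuous _ _ tadic tadic ι) (hιinj : Function.Injective ι)
    (ρ : PowerSeries ℂ ≃ₐ[ℂ] PowerSeries ℂ) (hρ : IsAutO ρ) :
    (∀ f, ρ (ι f) ∈ Set.range ι) ↔
      ∀ n : ℕ, ¬ n ≡ 1 [MOD N] → PowerSeries.coeff n (ρ PowerSeries.X) = 0 :=
  preserves_tN_iff_coeff_general N hN ι hιX ρ hρ
end
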